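/- The single-variable integral for I_yy evaluates as ∫_{−2π/3}^{2π/3} (542 cos t + 322 cos 2t + 122 cos 3t + 21 cos 4t + 361)·tan²(t/2) / (240·√(2 cos t + 1)) dt = (71/45)·E(3/4) − (19/90)·K(3/4), where K(m) = ∫₀^{π/2} 1/√(1 − m sin²θ) dθ and E(m) = ∫₀^{π/2} √(1 − m sin²θ) dθ. -/

import Mathlib

open Real

/-- Complete elliptic integral of the first kind. -/
noncomputable def ellipticK (m : ℝ) : ℝ :=
  ∫ θ in (0:ℝ)..(π/2), 1 / Real.sqrt (1 - m * Real.sin θ ^ 2)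

/-- Complete elliptic integral of the second kind. -/
noncomputable def ellipticE (m : ℝ) : ℝ :=
  ∫ θ in (0:ℝ)..(π/2), Real.sqrt (1 - m * Real.sin θ ^ 2)

/-!
Substitute `sin φ = (2 / √3) sin (t / 2)`. Then `√(1 - ¾ sin² φ) = cos (t / 2)` and
`dφ = cos (t / 2) dt / √(2 cos t + 1)`, so the integrand `g` of `71/45 E - 19/90 K` becomes
`(71 cos t + 52) / (90 √(2 cos t + 1)) dt`. Twice the given integrand differs from this by `1/90`
times the derivative of the elementary term
`B t = sin t (18 cos³ t + 30 cos² t - 7 cos t + 41) √(2 cos t + 1) / (1 + cos t)`,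
a polynomial identity in `cos t`. The primitive `(∫₀^φ g) / 2 - B / 180` is odd and continuous
up to `t = 2π/3`, where `φ = π/2` and `B = 0`. The integrand is nonnegative, which makes it
integrable although it blows up at `±2π/3`.
-/

open Set MeasureTheory intervalIntegral

lemma integral_zero_neg_of_even {f : ℝ → ℝ} (hf : ∀ x, f (-x) = f x) (a : ℝ) :
    ∫ x in (0:ℝ)..-a, f x = -∫ x in (0:ℝ)..a, f x := by
  have h := integral_comp_neg (a := 0) (b := a) f
  simp only [hf, neg_zero] at h
  rw [integral_symm, h]

lemma sqrt_one_sub_mul_sin_sq_pos {m : ℝ} (hm : m < 1) (θ : ℝ) :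
    0 < √(1 - m * sin θ ^ 2) := by
  apply sqrt_pos.2
  rcases le_total m 0 with h | h
  · nlinarith [sq_nonneg (sin θ)]
  · nlinarith [sin_sq_le_one θ]

lemma continuous_one_div_sqrt_one_sub_mul_sin_sq {m : ℝ} (hm : m < 1) :
    Continuous fun θ => 1 / √(1 - m * sin θ ^ 2) :=
  continuous_const.div (by fun_prop) fun θ => (sqrt_one_sub_mul_sin_sq_pos hm θ).ne'

lemma integral_mul_ellipticE_sub_mul_ellipticK {m : ℝ} (hm : m < 1) (a b : ℝ) :
    ∫ θ in (0:ℝ)..(π/2), (a * √(1 - m * sin θ ^ 2) - b * (1 / √(1 - m * sin θ ^ 2))) =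
      a * ellipticE m - b * ellipticK m := by
  have hE : Continuous fun θ => √(1 - m * sin θ ^ 2) := by fun_prop
  have hK := continuous_one_div_sqrt_one_sub_mul_sin_sq hm
  rw [integral_sub ((hE.intervalIntegrable _ _).const_mul a)
    ((hK.intervalIntegrable _ _).const_mul b), intervalIntegral.integral_const_mul,
    intervalIntegral.integral_const_mul, ellipticE, ellipticK]

lemma sin_half_sq (t : ℝ) : sin (t / 2) ^ 2 = (1 - cos t) / 2 := by
  have h := cos_sq_add_sin_sq (t / 2)
  rw [cos_sq (t / 2), show 2 * (t / 2) = t by ring] at h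
  linarith

lemma cos_half_sq (t : ℝ) : cos (t / 2) ^ 2 = (1 + cos t) / 2 := by
  rw [cos_sq (t / 2), show 2 * (t / 2) = t by ring]
  ring

lemma tan_half_sq (t : ℝ) : tan (t / 2) ^ 2 = (1 - cos t) / (1 + cos t) := by
  rw [tan_eq_sin_div_cos, div_pow, sin_half_sq, cos_half_sq,
    div_div_div_cancel_right₀ two_ne_zero]

lemma cos_two_pi_div_three : cos (2 * π / 3) = -(1 / 2) := by
  rw [show 2 * π / 3 = π - π / 3 by ring, cos_pi_sub, cos_pi_div_three]

lemma neg_half_le_cos {t : ℝ} (ht : |t| ≤ 2 * π / 3) : -(1 / 2) ≤ cos t := by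
  rw [← cos_abs, ← cos_two_pi_div_three]
  exact cos_le_cos_of_nonneg_of_le_pi (abs_nonneg t) (by linarith [pi_pos]) ht

lemma neg_half_lt_cos {t : ℝ} (ht : |t| < 2 * π / 3) : -(1 / 2) < cos t := by
  rw [← cos_abs, ← cos_two_pi_div_three]
  exact cos_lt_cos_of_nonneg_of_le_pi (abs_nonneg t) (by linarith [pi_pos]) ht

lemma cos_half_pos {t : ℝ} (ht : |t| < 2 * π / 3) : 0 < cos (t / 2) := by
  obtain ⟨h₁, h₂⟩ := abs_lt.1 ht
  exact cos_pos_of_mem_Ioo ⟨by linarith, by linarith⟩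

noncomputable def oloidAngle (t : ℝ) : ℝ := arcsin (2 / √3 * sin (t / 2))

lemma oloidAngle_neg (t : ℝ) : oloidAngle (-t) = -oloidAngle t := by
  rw [oloidAngle, oloidAngle, neg_div, sin_neg, mul_neg, arcsin_neg]

lemma sq_two_div_sqrt_three_mul_sin_half (t : ℝ) :
    (2 / √3 * sin (t / 2)) ^ 2 = 2 * (1 - cos t) / 3 := by
  rw [mul_pow, div_pow, sq_sqrt (by norm_num), sin_half_sq]
  ring

lemma oloidAngle_two_pi_div_three : oloidAngle (2 * π / 3) = π / 2 := by
  rw [oloidAngle, show 2 * π / 3 / 2 = π / 3 by ring, sin_pi_div_three,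
    show 2 / √3 * (√3 / 2) = 1 by field_simp, arcsin_one]

lemma sqrt_one_sub_sin_oloidAngle_sq {t : ℝ} (hq : 0 ≤ 2 * cos t + 1) (hc : 0 ≤ cos (t / 2)) :
    √(1 - 3 / 4 * sin (oloidAngle t) ^ 2) = cos (t / 2) := by
  have h := sq_two_div_sqrt_three_mul_sin_half t
  rw [oloidAngle, sin_arcsin (by nlinarith) (by nlinarith), h, ← sqrt_sq hc, cos_half_sq]
  ring_nf

lemma hasDerivAt_oloidAngle {t : ℝ} (hq : 0 < 2 * cos t + 1) :
    HasDerivAt oloidAngle (cos (t / 2) / √(2 * cos t + 1)) t := by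
  have harg := sq_two_div_sqrt_three_mul_sin_half t
  have hne₁ : 2 / √3 * sin (t / 2) ≠ -1 := fun h => by rw [h] at harg; linarith
  have hne₂ : 2 / √3 * sin (t / 2) ≠ 1 := fun h => by rw [h] at harg; linarith
  have hinner :
      HasDerivAt (fun u => 2 / √3 * sin (u / 2)) (2 / √3 * (cos (t / 2) * (1 / 2))) t :=
    ((hasDerivAt_sin _).comp t ((hasDerivAt_id t).div_const 2)).const_mul _
  refine ((hasDerivAt_arcsin hne₁ hne₂).comp t hinner).congr_deriv ?_
  rw [harg, show 1 - 2 * (1 - cos t) / 3 = (2 * cos t + 1) / 3 by ring, sqrt_div hq.le]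
  have h3 : 0 < √3 := by positivity
  field_simp

noncomputable def oloidEllipticIntegrand (θ : ℝ) : ℝ :=
  71 / 45 * √(1 - 3 / 4 * sin θ ^ 2) - 19 / 90 * (1 / √(1 - 3 / 4 * sin θ ^ 2))

lemma continuous_oloidEllipticIntegrand : Continuous oloidEllipticIntegrand :=
  (continuous_const.mul (by fun_prop)).sub
    (continuous_const.mul (continuous_one_div_sqrt_one_sub_mul_sin_sq (by norm_num)))

lemma oloidEllipticIntegrand_neg (θ : ℝ) :
    oloidEllipticIntegrand (-θ) = oloidEllipticIntegrand θ := by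
  simp [oloidEllipticIntegrand]

lemma hasDerivAt_integral_oloidAngle {t : ℝ} (ht : |t| < 2 * π / 3) :
    HasDerivAt (fun t => ∫ θ in (0:ℝ)..oloidAngle t, oloidEllipticIntegrand θ)
      ((71 * cos t + 52) / (90 * √(2 * cos t + 1))) t := by
  have hq : 0 < 2 * cos t + 1 := by linarith [neg_half_lt_cos ht]
  have hc := cos_half_pos ht
  have hg := continuous_oloidEllipticIntegrand
  have hG : HasDerivAt (fun x => ∫ θ in (0:ℝ)..x, oloidEllipticIntegrand θ)
      (oloidEllipticIntegrand (oloidAngle t)) (oloidAngle t) :=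
    integral_hasDerivAt_right (hg.intervalIntegrable _ _)
      hg.aestronglyMeasurable.stronglyMeasurableAtFilter hg.continuousAt
  refine (hG.comp t (hasDerivAt_oloidAngle hq)).congr_deriv ?_
  rw [oloidEllipticIntegrand, sqrt_one_sub_sin_oloidAngle_sq hq.le hc.le]
  have hr0 : √(2 * cos t + 1) ≠ 0 := (sqrt_pos.2 hq).ne'
  field_simp
  rw [cos_half_sq]
  ring

noncomputable def oloidBoundaryTerm (t : ℝ) : ℝ :=
  sin t * (18 * cos t ^ 3 + 30 * cos t ^ 2 - 7 * cos t + 41) * √(2 * cos t + 1) / (1 + cos t)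

lemma oloidBoundaryTerm_neg (t : ℝ) : oloidBoundaryTerm (-t) = -oloidBoundaryTerm t := by
  simp only [oloidBoundaryTerm, sin_neg, cos_neg, neg_mul, neg_div]

lemma oloidBoundaryTerm_two_pi_div_three : oloidBoundaryTerm (2 * π / 3) = 0 := by
  rw [oloidBoundaryTerm, cos_two_pi_div_three]
  norm_num

lemma hasDerivAt_oloidBoundaryTerm {t : ℝ} (hq : 0 < 2 * cos t + 1) :
    HasDerivAt oloidBoundaryTerm
      ((126 * cos t ^ 5 + 240 * cos t ^ 4 - 9 * cos t ^ 3 - 154 * cos t ^ 2 + 36 * cos t + 7) /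
        ((1 + cos t) * √(2 * cos t + 1))) t := by
  have hC := hasDerivAt_cos t
  have hR : HasDerivAt (fun u => 18 * cos u ^ 3 + 30 * cos u ^ 2 - 7 * cos u + 41)
      (-(54 * cos t ^ 2 + 60 * cos t - 7) * sin t) t :=
    ((((hC.pow 3).const_mul 18).add ((hC.pow 2).const_mul 30)).sub (hC.const_mul 7)).add_const
      41 |>.congr_deriv (by push_cast; ring)
  have hr : HasDerivAt (fun u => √(2 * cos u + 1)) (-sin t / √(2 * cos t + 1)) t :=
    ((hC.const_mul 2).add_const 1).sqrt hq.ne' |>.congr_deriv (by field_simp)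
  have hu : 1 + cos t ≠ 0 := by linarith
  refine (((hasDerivAt_sin t).mul hR).mul hr).div (hC.const_add 1) hu |>.congr_deriv ?_
  simp only [Pi.mul_apply]
  have hs : sin t ^ 2 = 1 - cos t ^ 2 := sin_sq t
  have hr2 : √(2 * cos t + 1) ^ 2 = 2 * cos t + 1 := sq_sqrt hq.le
  have hr0 : √(2 * cos t + 1) ≠ 0 := (sqrt_pos.2 hq).ne'
  set r := √(2 * cos t + 1)
  field_simp
  rw [hs, hr2]
  ring

noncomputable def oloidIntegrand (t : ℝ) : ℝ :=
  (542 * cos t + 322 * cos (2 * t) + 122 * cos (3 * t) + 21 * cos (4 * t) + 361) *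
    tan (t / 2) ^ 2 /
    (240 * √(2 * cos t + 1))

lemma oloid_numerator_eq (t : ℝ) :
    542 * cos t + 322 * cos (2 * t) + 122 * cos (3 * t) + 21 * cos (4 * t) + 361 =
      168 * cos t ^ 4 + 488 * cos t ^ 3 + 476 * cos t ^ 2 + 176 * cos t + 60 := by
  rw [show 4 * t = 2 * (2 * t) by ring, cos_two_mul (2 * t), cos_two_mul, cos_three_mul]
  ring

lemma oloid_numerator_pos (x : ℝ) :
    0 < 168 * x ^ 4 + 488 * x ^ 3 + 476 * x ^ 2 + 176 * x + 60 := by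
  nlinarith [sq_nonneg (x ^ 2 + 3 / 2 * x), sq_nonneg (x + 1 / 2), sq_nonneg (x ^ 2 + x),
    sq_nonneg (x + 1)]

lemma oloidIntegrand_nonneg (t : ℝ) : 0 ≤ oloidIntegrand t := by
  rw [oloidIntegrand, oloid_numerator_eq]
  exact div_nonneg (mul_nonneg (oloid_numerator_pos _).le (sq_nonneg _)) (by positivity)

noncomputable def oloidPrimitive (t : ℝ) : ℝ :=
  (∫ θ in (0:ℝ)..oloidAngle t, oloidEllipticIntegrand θ) / 2 - oloidBoundaryTerm t / 180

lemma hasDerivAt_oloidPrimitive {t : ℝ} (ht : |t| < 2 * π / 3) :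
    HasDerivAt oloidPrimitive (oloidIntegrand t) t := by
  have hq : 0 < 2 * cos t + 1 := by linarith [neg_half_lt_cos ht]
  refine ((hasDerivAt_integral_oloidAngle ht).div_const 2).sub
    ((hasDerivAt_oloidBoundaryTerm hq).div_const 180) |>.congr_deriv ?_
  have hu : 1 + cos t ≠ 0 := by linarith
  have hr0 : √(2 * cos t + 1) ≠ 0 := (sqrt_pos.2 hq).ne'
  rw [oloidIntegrand, oloid_numerator_eq, tan_half_sq]
  field_simp
  ring

lemma continuousOn_oloidPrimitive :
    ContinuousOn oloidPrimitive (Icc (-(2 * π / 3)) (2 * π / 3)) := by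
  have hG : Continuous fun t => ∫ θ in (0:ℝ)..oloidAngle t, oloidEllipticIntegrand θ :=
    (continuous_primitive (continuous_oloidEllipticIntegrand.intervalIntegrable) 0).comp
      (continuous_arcsin.comp (by fun_prop))
  refine (hG.continuousOn.div_const 2).sub (ContinuousOn.div_const ?_ 180)
  refine ContinuousOn.div (by fun_prop) (by fun_prop) fun t ht => ?_
  linarith [neg_half_le_cos (abs_le.2 ht)]

lemma oloidPrimitive_neg (t : ℝ) : oloidPrimitive (-t) = -oloidPrimitive t := by
  rw [oloidPrimitive, oloidPrimitive, oloidAngle_neg, oloidBoundaryTerm_neg,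
    integral_zero_neg_of_even oloidEllipticIntegrand_neg]
  ring

lemma oloidPrimitive_two_pi_div_three :
    oloidPrimitive (2 * π / 3) = (∫ θ in (0:ℝ)..(π / 2), oloidEllipticIntegrand θ) / 2 := by
  rw [oloidPrimitive, oloidAngle_two_pi_div_three, oloidBoundaryTerm_two_pi_div_three]
  ring

theorem oloid_Iyy_single_integral :
    ∫ t in (-(2*π/3))..(2*π/3),
        (542 * Real.cos t + 322 * Real.cos (2*t) + 122 * Real.cos (3*t) +
            21 * Real.cos (4*t) + 361) * Real.tan (t/2) ^ 2 /
          (240 * Real.sqrt (2 * Real.cos t + 1)) =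
      71/45 * ellipticE (3/4) - 19/90 * ellipticK (3/4) := by
  have hle : -(2 * π / 3) ≤ 2 * π / 3 := by linarith [pi_pos]
  have hderiv :
      ∀ t ∈ Ioo (-(2 * π / 3)) (2 * π / 3), HasDerivAt oloidPrimitive (oloidIntegrand t) t :=
    fun t ht => hasDerivAt_oloidPrimitive (abs_lt.2 ht)
  have hint : IntervalIntegrable oloidIntegrand volume (-(2 * π / 3)) (2 * π / 3) :=
    intervalIntegrable_deriv_of_nonneg (uIcc_of_le hle ▸ continuousOn_oloidPrimitive)
      (by simpa [hle] using hderiv) fun t _ => oloidIntegrand_nonneg t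
  change ∫ t in _.._, oloidIntegrand t = _
  rw [integral_eq_sub_of_hasDerivAt_of_le hle continuousOn_oloidPrimitive hderiv hint,
    oloidPrimitive_neg, oloidPrimitive_two_pi_div_three]
  unfold oloidEllipticIntegrand
  rw [integral_mul_ellipticE_sub_mul_ellipticK (by norm_num)]
  ring
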